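/- arXiv:2210.08234 — 2 statements merged into one kernel-verified Lean document; each statement's English description precedes it below -/
import Mathlib

section
/- Let $\widetilde{Y}=(V,E,F,\widetilde{\varphi}_2)$ be an abstract van Kampen 2-complex with $k$ abstract relators. For $1\le i\le k$ let $\alpha_i$ be the number of geometric faces labeled by the abstract relator $i$ and let $\eta_i$ be the number of free-to-fill abstract letters of relator $i$. Then $\sum_{i=1}^{k}\alpha_i\eta_i \le |\widetilde{Y}^{(1)}| + \mathrm{Red}(\widetilde{Y})$, where $|\widetilde{Y}^{(1)}|$ is the number of geometric edges and $\mathrm{Red}(\widetilde{Y})$ is the reduction degree. -/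
open Finset

noncomputable section

/-- Lexicographic order on abstract letters `(i, j)`. -/
def lexLe (a b : ℕ × ℕ) : Prop := a.1 < b.1 ∨ (a.1 = b.1 ∧ a.2 ≤ b.2)

variable {k : ℕ} {E F : Type}

/-- In an abstract van Kampen 2-complex with geometric edges `E`, faces `F`, abstract
relator lengths `L`, face labels `lab` and boundary map `bd` (`bd f j` is the `j`-th
geometric edge of `∂f`), the abstract letter `(i, j)` *decorates* the geometric edge `e`
if some face labeled `i` has `e` as its `j`-th boundary edge. -/
def Decorates (L : Fin k → ℕ) (lab : F → Fin k) (bd : F → ℕ → E)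
    (e : E) (i : Fin k) (j : ℕ) : Prop :=
  j < L i ∧ ∃ f : F, lab f = i ∧ bd f j = e

/-- The abstract letter `(i, j)` is *free-to-fill* if on every geometric edge that it
decorates it is the (lexicographically) minimal decoration. -/
def FreeToFill (L : Fin k → ℕ) (lab : F → Fin k) (bd : F → ℕ → E)
    (i : Fin k) (j : ℕ) : Prop :=
  j < L i ∧ ∀ e : E, Decorates L lab bd e i j →
    ∀ (i' : Fin k) (j' : ℕ), Decorates L lab bd e i' j' → lexLe (i.1, j) (i'.1, j')

/-!
Count the pairs (face `f` labeled `i`, free-to-fill letter `(i, j)`) by the edge `bd f j`.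
Each face has exactly one `j`-th edge, so `∑ αᵢ ηᵢ = ∑_e ∑_{(i,j) free} N(e, i, j)`,
where `N(e, i, j)` counts the faces labeled `i` with `j`-th edge `e`. Two free-to-fill letters
on the same edge would both be its lexicographically minimal decoration, so at most one term of
the inner sum is nonzero, and the inner sum is at most `1 + ∑_{i,j} (N(e, i, j) - 1)⁺`.
-/

lemma lexLe_antisymm {a b : ℕ × ℕ} (hab : lexLe a b) (hba : lexLe b a) : a = b := by
  unfold lexLe at hab hba
  exact Prod.ext (by omega) (by omega)

lemma Finset.sum_le_one_add_sum_tsub_one {α : Type*} (s : Finset α) (g : α → ℕ)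
    (h : ∀ a ∈ s, ∀ b ∈ s, 0 < g a → 0 < g b → a = b) :
    ∑ a ∈ s, g a ≤ 1 + ∑ a ∈ s, (g a - 1) := by
  classical
  have hcard : #{a ∈ s | 0 < g a} ≤ 1 :=
    card_le_one.2 fun a ha b hb => by
      rw [mem_filter] at ha hb
      exact h a ha.1 b hb.1 ha.2 hb.2
  calc ∑ a ∈ s, g a = ∑ a ∈ s with 0 < g a, g a :=
        (sum_filter_of_ne fun _ _ hg => Nat.pos_of_ne_zero hg).symm
    _ ≤ ∑ a ∈ s with 0 < g a, (1 + (g a - 1)) := sum_le_sum fun _ _ => by omega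
    _ = #{a ∈ s | 0 < g a} + ∑ a ∈ s with 0 < g a, (g a - 1) := by
        rw [sum_add_distrib, sum_const, smul_eq_mul, mul_one]
    _ ≤ 1 + ∑ a ∈ s, (g a - 1) :=
        add_le_add hcard (sum_le_sum_of_subset (filter_subset _ _))

section Complex

variable (L : Fin k → ℕ) (lab : F → Fin k) (bd : F → ℕ → E)

def incidenceCount (e : E) (i : Fin k) (j : ℕ) : ℕ :=
  Nat.card {f : F // lab f = i ∧ bd f j = e}

open Classical in
def freeToFillLetters (i : Fin k) : Finset ℕ :=
  {j ∈ range (L i) | FreeToFill L lab bd i j}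

lemma card_freeToFill_eq_card_freeToFillLetters (i : Fin k) :
    Nat.card {j : ℕ // FreeToFill L lab bd i j} = #(freeToFillLetters L lab bd i) := by
  classical
  rw [← Nat.card_eq_finsetCard]
  refine Nat.card_congr (Equiv.subtypeEquivRight fun j => ?_)
  simp only [freeToFillLetters, mem_filter, mem_range]
  exact ⟨fun h => ⟨h.1, h⟩, And.right⟩

lemma card_label_eq_sum_incidenceCount [Fintype E] [Fintype F] (i : Fin k) (j : ℕ) :
    Nat.card {f : F // lab f = i} = ∑ e : E, incidenceCount lab bd e i j := by
  classical
  simp only [incidenceCount, Nat.card_eq_fintype_card, Fintype.card_subtype]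
  rw [card_eq_sum_card_fiberwise fun f _ => mem_univ (bd f j)]
  simp only [filter_filter]

lemma decorates_of_incidenceCount_pos {e : E} {i : Fin k} {j : ℕ} (hj : j < L i)
    (hpos : 0 < incidenceCount lab bd e i j) : Decorates L lab bd e i j :=
  let ⟨f, hf⟩ := (Nat.card_pos_iff.1 hpos).1
  ⟨hj, f, hf⟩

lemma FreeToFill.eq_of_decorates {e : E} {i i' : Fin k} {j j' : ℕ}
    (hfree : FreeToFill L lab bd i j) (hfree' : FreeToFill L lab bd i' j')
    (hdec : Decorates L lab bd e i j) (hdec' : Decorates L lab bd e i' j') :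
    i = i' ∧ j = j' := by
  have h := lexLe_antisymm (hfree.2 e hdec i' j' hdec') (hfree'.2 e hdec' i j hdec)
  simp only [Prod.mk.injEq] at h
  exact ⟨Fin.ext h.1, h.2⟩

lemma sum_freeToFillLetters_incidenceCount_le (e : E) :
    ∑ i : Fin k, ∑ j ∈ freeToFillLetters L lab bd i, incidenceCount lab bd e i j
      ≤ 1 + ∑ i : Fin k, ∑ j ∈ range (L i), (incidenceCount lab bd e i j - 1) := by
  classical
  have hsub : univ.sigma (freeToFillLetters L lab bd) ⊆ univ.sigma fun i => range (L i) :=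
    sigma_mono subset_rfl fun _ => filter_subset _ _
  have hunique : ∀ p ∈ univ.sigma (freeToFillLetters L lab bd),
      ∀ q ∈ univ.sigma (freeToFillLetters L lab bd),
      0 < incidenceCount lab bd e p.1 p.2 → 0 < incidenceCount lab bd e q.1 q.2 → p = q := by
    rintro ⟨i, j⟩ hp ⟨i', j'⟩ hq hpos hpos'
    simp only [mem_sigma, mem_univ, true_and, freeToFillLetters, mem_filter] at hp hq
    obtain ⟨rfl, rfl⟩ := hp.2.eq_of_decorates L lab bd hq.2
      (decorates_of_incidenceCount_pos L lab bd hp.2.1 hpos)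
      (decorates_of_incidenceCount_pos L lab bd hq.2.1 hpos')
    rfl
  rw [sum_sigma', sum_sigma' univ fun i => range (L i)]
  exact (sum_le_one_add_sum_tsub_one _ _ hunique).trans
    (add_le_add_right (sum_le_sum_of_subset hsub) 1)

end Complex

theorem alpha_eta_le_edges_add_red_general
    [Fintype E] [Fintype F]
    (L : Fin k → ℕ) (lab : F → Fin k) (bd : F → ℕ → E) :
    ∑ i : Fin k,
        Nat.card {f : F // lab f = i} * Nat.card {j : ℕ // FreeToFill L lab bd i j}
      ≤ Fintype.card E +
        ∑ e : E, ∑ i : Fin k, ∑ j ∈ Finset.range (L i),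
          (Nat.card {f : F // lab f = i ∧ bd f j = e} - 1) := by
  set N := incidenceCount lab bd
  set letters := freeToFillLetters L lab bd
  change _ ≤ _ + ∑ e : E, ∑ i : Fin k, ∑ j ∈ range (L i), (N e i j - 1)
  calc ∑ i : Fin k,
        Nat.card {f : F // lab f = i} * Nat.card {j : ℕ // FreeToFill L lab bd i j}
      = ∑ i : Fin k, ∑ j ∈ letters i, ∑ e : E, N e i j := by
        refine sum_congr rfl fun i _ => ?_
        simp only [N, letters, ← card_label_eq_sum_incidenceCount, sum_const, smul_eq_mul,
          card_freeToFill_eq_card_freeToFillLetters, mul_comm]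
    _ = ∑ e : E, ∑ i : Fin k, ∑ j ∈ letters i, N e i j := by
        rw [sum_comm]
        exact sum_congr rfl fun e _ => sum_comm.symm
    _ ≤ ∑ e : E, (1 + ∑ i : Fin k, ∑ j ∈ range (L i), (N e i j - 1)) :=
        sum_le_sum fun e _ => sum_freeToFillLetters_incidenceCount_le L lab bd e
    _ = Fintype.card E + ∑ e : E, ∑ i : Fin k, ∑ j ∈ range (L i), (N e i j - 1) := by
        rw [sum_add_distrib, sum_const, smul_eq_mul, mul_one, card_univ]

/-- for an abstract van Kampen 2-complex `Ỹ` with `k` abstract relators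
(and no isolated edges), with `αᵢ` the number of geometric faces labeled by the abstract
relator `i` and `ηᵢ` the number of free-to-fill abstract letters of `i`, one has
`∑ αᵢ ηᵢ ≤ |Ỹ⁽¹⁾| + Red(Ỹ)`, where `|Ỹ⁽¹⁾|` is the number of geometric edges and
`Red(Ỹ) = ∑_e ∑_i ∑_j (|{f : lab f = i, e is the j-th edge of ∂f}| - 1)⁺` is the
reduction degree (truncated subtraction on `ℕ` is the positive part). -/
theorem alpha_eta_le_edges_add_red
    [Fintype E] [Fintype F]
    (L : Fin k → ℕ) (lab : F → Fin k) (bd : F → ℕ → E)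
    (hni : ∀ e : E, ∃ f : F, ∃ j < L (lab f), bd f j = e) :
    ∑ i : Fin k,
        Nat.card {f : F // lab f = i} * Nat.card {j : ℕ // FreeToFill L lab bd i j}
      ≤ Fintype.card E +
        ∑ e : E, ∑ i : Fin k, ∑ j ∈ Finset.range (L i),
          (Nat.card {f : F // lab f = i ∧ bd f j = e} - 1) :=
  alpha_eta_le_edges_add_red_general L lab bd
end
end

section
/- Let $p\ge 1$ be an integer and let $Y$ be the geometric form with $p+1$ faces: a central face whose boundary consists of $p$ edges of length $1/(2p)$ and one edge of length $1/2$, and, attached to each length-$1/(2p)$ edge, an outer face with one additional edge of length $1 - 1/(2p)$. Then $\mathrm{dens}(Y) = \frac{p+1/2}{p+1}$ and $\mathrm{dens}_c(Y) = \frac{p+1/2}{p+1}$; in particular $\frac{1 + i(1 - 1/(2p))}{i+1} \ge \frac{p + 1/2}{p+1}$ for every $0 \le i \le p$. -/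
open Finset

noncomputable section
open scoped Classical

/-- A *geometric form* of 2-complexes `(Y, λ)`: a finite 2-complex without isolated
edges, recorded by its finite sets of geometric edges `E` and geometric faces `F`, an
edge-length function `lam : E → (0,1]`, and for each face the set `bedges f` of geometric
edges on its boundary, the boundary of each face having total `λ`-length at most `1`. -/
structure GeomForm where
  E : Type
  F : Type
  instE : Fintype E
  instF : Fintype F
  instNF : Nonempty F
  lam : E → ℝ
  lam_pos : ∀ e, 0 < lam e
  lam_le_one : ∀ e, lam e ≤ 1
  bedges : F → Finset E
  face_len_le : ∀ f, ∑ e ∈ bedges f, lam e ≤ 1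
  no_isolated : ∀ e, ∃ f, e ∈ bedges f

attribute [instance] GeomForm.instE GeomForm.instF GeomForm.instNF

namespace GeomForm

variable (Y : GeomForm)

/-- The set of geometric edges of the sub-2-complex spanned by a set of faces `S`. -/
def edgesOf (S : Finset Y.F) : Finset Y.E := S.biUnion Y.bedges

/-- The density of the sub-2-complex spanned by a set of faces `S`:
`dens Z = (∑_{e ∈ Edge(Z)} λ_e) / |Z|`. -/
def dens (S : Finset Y.F) : ℝ := (∑ e ∈ Y.edgesOf S, Y.lam e) / S.card

/-- The critical density `dens_c Y = min_{Z ≤ Y} dens Z` over nonempty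
sub-2-complexes `Z`. -/
def densc : ℝ := sInf {x | ∃ S : Finset Y.F, S.Nonempty ∧ x = Y.dens S}

end GeomForm

/-- geometric form for the `B(2p)` condition: let `p ≥ 1` and let `Y` be
the geometric form with `p + 1` faces: a central face `c` whose boundary consists of `p`
edges `a 0, …, a (p-1)` of length `1/(2p)` together with one edge `h0` of length `1/2`,
and for each edge `a i` an outer face `o i` attached along it, having one additional edge
`b i` of length `1 - 1/(2p)`.  Then `dens Y = (p + 1/2)/(p + 1)` and
`dens_c Y = (p + 1/2)/(p + 1)`; in particular for every `0 ≤ i ≤ p` one has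
`(1 + i(1 - 1/(2p)))/(i + 1) ≥ (p + 1/2)/(p + 1)`. -/
theorem b2p_geometric_form (p : ℕ) (hp : 1 ≤ p) (Y : GeomForm)
    (c : Y.F) (o : Fin p → Y.F) (a b : Fin p → Y.E) (h0 : Y.E)
    (ho : Function.Injective o) (hco : ∀ i, c ≠ o i)
    (ha : Function.Injective a) (hb : Function.Injective b)
    (hab : ∀ i j, a i ≠ b j) (hha : ∀ i, h0 ≠ a i) (hhb : ∀ i, h0 ≠ b i)
    (hF : (Finset.univ : Finset Y.F) = insert c (Finset.image o Finset.univ))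
    (hE : (Finset.univ : Finset Y.E) =
      insert h0 (Finset.image a Finset.univ ∪ Finset.image b Finset.univ))
    (hlh : Y.lam h0 = 1 / 2)
    (hla : ∀ i, Y.lam (a i) = 1 / (2 * (p : ℝ)))
    (hlb : ∀ i, Y.lam (b i) = 1 - 1 / (2 * (p : ℝ)))
    (hbc : Y.bedges c = insert h0 (Finset.image a Finset.univ))
    (hbo : ∀ i, Y.bedges (o i) = {a i, b i}) :
    Y.dens Finset.univ = ((p : ℝ) + 1 / 2) / ((p : ℝ) + 1) ∧
      Y.densc = ((p : ℝ) + 1 / 2) / ((p : ℝ) + 1) ∧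
      ∀ i : ℕ, i ≤ p →
        ((p : ℝ) + 1 / 2) / ((p : ℝ) + 1)
          ≤ (1 + (i : ℝ) * (1 - 1 / (2 * (p : ℝ)))) / ((i : ℝ) + 1) := by
  classical
  have hp0 : (0:ℝ) < p := by exact_mod_cast hp
  have hpne : (p:ℝ) ≠ 0 := ne_of_gt hp0
  set v : ℝ := ((p:ℝ) + 1/2)/((p:ℝ)+1) with hv
  -- key inequality
  have hkey : ∀ k : ℕ, k ≤ p → v ≤ (1 + (k:ℝ)*(1-1/(2*(p:ℝ))))/((k:ℝ)+1) := by
    intro k hk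
    have hk' : (k:ℝ) ≤ p := by exact_mod_cast hk
    have hu : (2*(p:ℝ)) * (1/(2*(p:ℝ))) = 1 := by field_simp
    have hupos : (0:ℝ) ≤ 1/(2*(p:ℝ)) := by positivity
    rw [hv, div_le_div_iff₀ (by positivity) (by positivity)]
    nlinarith [mul_nonneg (sub_nonneg.2 hk') hupos]
  have sumA : ∑ i : Fin p, Y.lam (a i) = 1/2 := by
    simp only [hla]
    rw [Finset.sum_const, Finset.card_univ, Fintype.card_fin, nsmul_eq_mul]
    field_simp
  have sumB : ∀ T : Finset (Fin p),
      ∑ i ∈ T, Y.lam (b i) = T.card * (1 - 1/(2*(p:ℝ))) := by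
    intro T; simp only [hlb]; rw [Finset.sum_const, nsmul_eq_mul]
  have hedges : ∀ T : Finset (Fin p),
      Y.edgesOf (insert c (T.image o))
        = insert h0 ((Finset.image a Finset.univ) ∪ T.image b) := by
    intro T
    ext e
    simp only [GeomForm.edgesOf, Finset.mem_biUnion, Finset.mem_insert, Finset.mem_union,
      Finset.mem_image, Finset.mem_univ, true_and]
    constructor
    · rintro ⟨f, hf, he⟩
      rcases hf with rfl | ⟨i, hi, rfl⟩
      · rw [hbc] at he
        simp only [Finset.mem_insert, Finset.mem_image, Finset.mem_univ, true_and] at he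
        tauto
      · rw [hbo] at he
        simp only [Finset.mem_insert, Finset.mem_singleton] at he
        rcases he with rfl | rfl
        · exact Or.inr (Or.inl ⟨i, rfl⟩)
        · exact Or.inr (Or.inr ⟨i, hi, rfl⟩)
    · rintro (rfl | ⟨i, rfl⟩ | ⟨i, hi, rfl⟩)
      · exact ⟨c, Or.inl rfl, by rw [hbc]; exact Finset.mem_insert_self _ _⟩
      · exact ⟨c, Or.inl rfl, by rw [hbc]; simp⟩
      · exact ⟨o i, Or.inr ⟨i, hi, rfl⟩, by rw [hbo]; simp⟩
  have hnotmem : ∀ T : Finset (Fin p),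
      h0 ∉ (Finset.image a Finset.univ) ∪ T.image b := by
    intro T h
    rcases Finset.mem_union.1 h with h | h
    · obtain ⟨i, _, hi⟩ := Finset.mem_image.1 h
      exact hha i hi.symm
    · obtain ⟨i, _, hi⟩ := Finset.mem_image.1 h
      exact hhb i hi.symm
  have hdisjab : ∀ T : Finset (Fin p),
      Disjoint (Finset.image a Finset.univ) (T.image b) := by
    intro T
    rw [Finset.disjoint_left]
    rintro e he he'
    obtain ⟨i, _, rfl⟩ := Finset.mem_image.1 he
    obtain ⟨j, _, hj⟩ := Finset.mem_image.1 he'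
    exact hab i j hj.symm
  have hesum : ∀ T : Finset (Fin p),
      ∑ e ∈ Y.edgesOf (insert c (T.image o)), Y.lam e
        = 1 + T.card * (1 - 1/(2*(p:ℝ))) := by
    intro T
    rw [hedges T, Finset.sum_insert (hnotmem T), Finset.sum_union (hdisjab T),
      Finset.sum_image (fun i _ j _ h => ha h), Finset.sum_image (fun i _ j _ h => hb h),
      hlh, sumA, sumB]
    ring
  have hcard : ∀ T : Finset (Fin p), (insert c (T.image o)).card = T.card + 1 := by
    intro T
    rw [Finset.card_insert_of_notMem, Finset.card_image_of_injective _ ho]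
    intro h
    obtain ⟨i, _, hi⟩ := Finset.mem_image.1 h
    exact hco i hi.symm
  have hdens : ∀ T : Finset (Fin p),
      Y.dens (insert c (T.image o))
        = (1 + (T.card:ℝ)*(1 - 1/(2*(p:ℝ))))/((T.card:ℝ)+1) := by
    intro T
    unfold GeomForm.dens
    rw [hesum, hcard]
    push_cast
    ring_nf
  have part1 : Y.dens Finset.univ = v := by
    rw [hF, hdens, Finset.card_univ, Fintype.card_fin, hv]
    rw [div_eq_div_iff (by positivity) (by positivity)]
    field_simp
    ring
  have hlb : ∀ S : Finset Y.F, S.Nonempty → v ≤ Y.dens S := by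
    intro S hS
    set T := Finset.univ.filter (fun i => o i ∈ S) with hT
    have hTk : T.card ≤ p := by
      simpa using Finset.card_le_univ T
    by_cases hcS : c ∈ S
    · have hSeq : S = insert c (T.image o) := by
        ext f
        have hf : f ∈ (Finset.univ : Finset Y.F) := Finset.mem_univ f
        rw [hF] at hf
        simp only [Finset.mem_insert, Finset.mem_image, Finset.mem_univ, true_and] at hf
        constructor
        · intro hfS
          rcases hf with rfl | ⟨i, rfl⟩
          · exact Finset.mem_insert_self _ _
          · exact Finset.mem_insert_of_mem
              (Finset.mem_image_of_mem o (by simp [hT, hfS]))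
        · intro hfi
          rcases Finset.mem_insert.1 hfi with rfl | hfi
          · exact hcS
          · obtain ⟨i, hi, rfl⟩ := Finset.mem_image.1 hfi
            exact (Finset.mem_filter.1 hi).2
      rw [hSeq, hdens]
      exact hkey T.card hTk
    · have hSeq : S = T.image o := by
        ext f
        have hf : f ∈ (Finset.univ : Finset Y.F) := Finset.mem_univ f
        rw [hF] at hf
        simp only [Finset.mem_insert, Finset.mem_image, Finset.mem_univ, true_and] at hf
        constructor
        · intro hfS
          rcases hf with rfl | ⟨i, rfl⟩
          · exact absurd hfS hcS
          · exact Finset.mem_image_of_mem o (by simp [hT, hfS])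
        · intro hfi
          obtain ⟨i, hi, rfl⟩ := Finset.mem_image.1 hfi
          exact (Finset.mem_filter.1 hi).2
      have hTne : T.Nonempty := by
        obtain ⟨f, hf⟩ := hS
        rw [hSeq] at hf
        obtain ⟨i, hi, _⟩ := Finset.mem_image.1 hf
        exact ⟨i, hi⟩
      have hEeq : Y.edgesOf (T.image o) = T.biUnion (fun i => ({a i, b i} : Finset Y.E)) := by
        ext e
        simp only [GeomForm.edgesOf, Finset.mem_biUnion, Finset.mem_image]
        constructor
        · rintro ⟨f, ⟨i, hi, rfl⟩, he⟩
          rw [hbo] at he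
          exact ⟨i, hi, he⟩
        · rintro ⟨i, hi, he⟩
          exact ⟨o i, ⟨i, hi, rfl⟩, by rw [hbo]; exact he⟩
      have hdisj : (T : Set (Fin p)).PairwiseDisjoint
          (fun i => ({a i, b i} : Finset Y.E)) := by
        intro i _ j _ hij
        simp only [Function.onFun, Finset.disjoint_left, Finset.mem_insert,
          Finset.mem_singleton]
        rintro e (rfl|rfl) (h|h)
        · exact hij (ha h)
        · exact hab i j h
        · exact hab j i h.symm
        · exact hij (hb h)
      have hsum : ∑ e ∈ Y.edgesOf S, Y.lam e = T.card := by
        rw [hSeq, hEeq, Finset.sum_biUnion hdisj]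
        have : ∀ i ∈ T, ∑ e ∈ ({a i, b i} : Finset Y.E), Y.lam e = 1 := by
          intro i _
          rw [Finset.sum_pair (hab i i)]
          rw [hla, hlb]; ring
        rw [Finset.sum_congr rfl this, Finset.sum_const, nsmul_eq_mul, mul_one]
      have hcardS : (S.card : ℝ) = T.card := by
        rw [hSeq, Finset.card_image_of_injective _ ho]
      have hTpos : (0:ℝ) < T.card := by
        exact_mod_cast Finset.card_pos.2 hTne
      have : Y.dens S = 1 := by
        unfold GeomForm.dens
        rw [hsum, hcardS, div_self (ne_of_gt hTpos)]
      rw [this, hv, div_le_one (by positivity)]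
      linarith
  refine ⟨part1, ?_, fun i hi => hkey i hi⟩
  apply le_antisymm
  · exact csInf_le ⟨v, by rintro x ⟨S, hS, rfl⟩; exact hlb S hS⟩
      ⟨Finset.univ, Finset.univ_nonempty, part1.symm⟩
  · exact le_csInf ⟨Y.dens Finset.univ, Finset.univ, Finset.univ_nonempty, rfl⟩
      (by rintro x ⟨S, hS, rfl⟩; exact hlb S hS)
end
end
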